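/- Let μ > 0, let N ≥ 1 be an integer, and let e, g ∈ ℝⁿ. Then g is a subgradient of the ℓ1 norm at e (i.e., ‖z‖₁ ≥ ‖e‖₁ + ⟨g, z − e⟩ for all z ∈ ℝⁿ) if and only if N·e = S_μ(N·e + μ·g), equivalently e = (1/N)·S_μ(N·e + μ·g). -/

import Mathlib

/-!
The subdifferential of `‖·‖₁` at `e` is the product of the subdifferentials of `|·|` at the
coordinates `eᵢ`, so everything reduces to one real coordinate. There `g ∈ ∂|x|` means `g = sign x`
if `x ≠ 0` and `|g| ≤ 1` if `x = 0`, and soft thresholding at level `μ` is exactly the inverse of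
`x ↦ x + μ ∂|x|`, i.e. the proximal map of `μ|·|`: hence `x = S_μ(x + μg)` iff `g ∈ ∂|x|`.
Both conditions are invariant under replacing `x` by `Nx` with `N > 0`.
-/

open scoped RealInnerProductSpace

/-- The soft-thresholding (shrinkage) operator on `ℝⁿ`, defined componentwise by
`(S_λ(x))ᵢ = sign(xᵢ) · max(|xᵢ| − λ, 0)`. -/
noncomputable def softThresh {n : ℕ} (lam : ℝ) (x : EuclideanSpace ℝ (Fin n)) :
    EuclideanSpace ℝ (Fin n) :=
  WithLp.toLp 2 (fun i => Real.sign (x i) * max (|x i| - lam) 0)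

theorem sum_add_inner_le_sum_iff {ι : Type*} [Fintype ι] (φ : ι → ℝ → ℝ)
    (e g : EuclideanSpace ℝ ι) :
    (∀ z : EuclideanSpace ℝ ι, ∑ i, φ i (e i) + ⟪g, z - e⟫ ≤ ∑ i, φ i (z i)) ↔
      ∀ i t, φ i (e i) + g i * (t - e i) ≤ φ i t := by
  classical
  have hgap : ∀ z : EuclideanSpace ℝ ι, ∑ i, φ i (e i) + ⟪g, z - e⟫ ≤ ∑ i, φ i (z i) ↔
      0 ≤ ∑ i, (φ i (z i) - (φ i (e i) + g i * (z i - e i))) := by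
    intro z
    simp only [PiLp.inner_apply, PiLp.sub_apply, Finset.sum_sub_distrib, Finset.sum_add_distrib,
      sub_nonneg]
    simp [mul_comm]
  simp only [hgap]
  constructor
  · intro h i t
    -- Perturbing only the `i`-th coordinate kills every other term of the gap.
    have hi := h (WithLp.toLp 2 (Function.update e.ofLp i t))
    rw [Finset.sum_eq_single i (fun j _ hj => by simp [Function.update_of_ne hj]) (by simp)] at hi
    simpa using hi
  · intro h z
    exact Finset.sum_nonneg fun i _ => sub_nonneg.2 (h i (z i))

theorem abs_subgradient_iff (x g : ℝ) :
    (∀ t, |x| + g * (t - x) ≤ |t|) ↔ |g| ≤ 1 ∧ g * x = |x| := by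
  constructor
  · intro h
    have hg : |g| ≤ 1 := by
      have h₁ := (h (x + 1)).trans (abs_add_le x 1)
      have h₂ := (h (x - 1)).trans (abs_sub x 1)
      simp only [add_sub_cancel_left, sub_sub_cancel_left, abs_one] at h₁ h₂
      rw [abs_le]
      constructor <;> linarith
    refine ⟨hg, le_antisymm ?_ (by simpa using h 0)⟩
    calc g * x ≤ |g| * |x| := (le_abs_self _).trans (abs_mul g x).le
      _ ≤ |x| := mul_le_of_le_one_left (abs_nonneg x) hg
  · rintro ⟨hg, hgx⟩ t
    calc |x| + g * (t - x) = g * t := by linarith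
      _ ≤ |g| * |t| := (le_abs_self _).trans (abs_mul g t).le
      _ ≤ |t| := mul_le_of_le_one_left (abs_nonneg t) hg

theorem abs_le_one_and_mul_eq_abs_iff (x g : ℝ) :
    |g| ≤ 1 ∧ g * x = |x| ↔ (x = 0 ∧ |g| ≤ 1) ∨ (0 < x ∧ g = 1) ∨ (x < 0 ∧ g = -1) := by
  rcases lt_trichotomy x 0 with hx | rfl | hx
  · rw [abs_of_neg hx]
    constructor
    · rintro ⟨-, h⟩
      exact Or.inr (Or.inr ⟨hx, by nlinarith⟩)
    · rintro (⟨rfl, -⟩ | ⟨hx', -⟩ | ⟨-, rfl⟩)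
      · exact absurd hx (lt_irrefl 0)
      · linarith
      · norm_num
  · simp
  · rw [abs_of_pos hx]
    constructor
    · rintro ⟨-, h⟩
      exact Or.inr (Or.inl ⟨hx, by nlinarith⟩)
    · rintro (⟨rfl, -⟩ | ⟨-, rfl⟩ | ⟨hx', -⟩)
      · exact absurd hx (lt_irrefl 0)
      · norm_num
      · linarith

theorem mul_mul_eq_abs_mul_iff {c : ℝ} (hc : 0 < c) (g x : ℝ) :
    g * (c * x) = |c * x| ↔ g * x = |x| := by
  rw [abs_mul, abs_of_pos hc, mul_left_comm]
  exact mul_right_inj' hc.ne'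

noncomputable def softThreshReal (lam w : ℝ) : ℝ := Real.sign w * max (|w| - lam) 0

theorem softThresh_apply {n : ℕ} (lam : ℝ) (x : EuclideanSpace ℝ (Fin n)) (i : Fin n) :
    softThresh lam x i = softThreshReal lam (x i) :=
  rfl

theorem softThreshReal_of_abs_le {lam w : ℝ} (h : |w| ≤ lam) : softThreshReal lam w = 0 := by
  simp [softThreshReal, max_eq_right (sub_nonpos.2 h)]

theorem softThreshReal_of_lt {lam w : ℝ} (hlam : 0 ≤ lam) (h : lam < w) :
    softThreshReal lam w = w - lam := by
  rw [softThreshReal, Real.sign_of_pos (hlam.trans_lt h), abs_of_pos (hlam.trans_lt h),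
    max_eq_left (by linarith), one_mul]

theorem softThreshReal_of_lt_neg {lam w : ℝ} (hlam : 0 ≤ lam) (h : w < -lam) :
    softThreshReal lam w = w + lam := by
  rw [softThreshReal, Real.sign_of_neg (by linarith), abs_of_neg (by linarith),
    max_eq_left (by linarith)]
  ring

theorem eq_softThreshReal_add_mul_iff {μ : ℝ} (hμ : 0 < μ) (x g : ℝ) :
    x = softThreshReal μ (x + μ * g) ↔ |g| ≤ 1 ∧ g * x = |x| := by
  rw [abs_le_one_and_mul_eq_abs_iff]
  constructor
  · intro hx
    rcases le_or_gt |x + μ * g| μ with hw | hw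
    · rw [softThreshReal_of_abs_le hw] at hx
      subst hx
      rw [zero_add, abs_mul, abs_of_pos hμ] at hw
      exact Or.inl ⟨rfl, (mul_le_iff_le_one_right hμ).1 hw⟩
    rcases lt_abs.1 hw with hw | hw
    · rw [softThreshReal_of_lt hμ.le hw] at hx
      exact Or.inr (Or.inl ⟨by linarith, by nlinarith⟩)
    · rw [softThreshReal_of_lt_neg hμ.le (by linarith)] at hx
      exact Or.inr (Or.inr ⟨by linarith, by nlinarith⟩)
  · rintro (⟨rfl, hg⟩ | ⟨hx, rfl⟩ | ⟨hx, rfl⟩)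
    · rw [softThreshReal_of_abs_le]
      rwa [zero_add, abs_mul, abs_of_pos hμ, mul_le_iff_le_one_right hμ]
    · rw [softThreshReal_of_lt hμ.le (by linarith)]
      ring
    · rw [softThreshReal_of_lt_neg hμ.le (by linarith)]
      ring

/-- Let `μ > 0`, `N ≥ 1` an integer, and `e, g ∈ ℝⁿ`.  Then `g` is a subgradient of the `ℓ₁`
norm at `e` (i.e. `‖z‖₁ ≥ ‖e‖₁ + ⟨g, z − e⟩` for all `z`) if and only if
`N·e = S_μ(N·e + μ·g)`, equivalently `e = (1/N)·S_μ(N·e + μ·g)`. -/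
theorem l1_subgradient_iff_softThresh_fixed_point {n : ℕ} (μ : ℝ) (hμ : 0 < μ)
    (N : ℕ) (hN : 1 ≤ N) (e g : EuclideanSpace ℝ (Fin n)) :
    (∀ z : EuclideanSpace ℝ (Fin n), (∑ i, |e i|) + ⟪g, z - e⟫ ≤ ∑ i, |z i|) ↔
      ((N : ℝ) • e = softThresh μ ((N : ℝ) • e + μ • g) ∧
        e = (N : ℝ)⁻¹ • softThresh μ ((N : ℝ) • e + μ • g)) := by
  have hN' : (0 : ℝ) < N := by exact_mod_cast hN
  rw [and_iff_left_of_imp fun h => by rw [← h, inv_smul_smul₀ hN'.ne']]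
  refine (sum_add_inner_le_sum_iff (fun _ => abs) e g).trans ?_
  simp only [abs_subgradient_iff, PiLp.ext_iff, softThresh_apply, PiLp.add_apply, PiLp.smul_apply,
    smul_eq_mul, eq_softThreshReal_add_mul_iff hμ, mul_mul_eq_abs_mul_iff hN']
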